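/- arXiv:2110.01682 — 7 statements merged into one kernel-verified Lean document; each statement's English description precedes it below -/
import Mathlib

section
/- Let s₁, s₂, r, ω, s̃₁, s̃₂, r̃, ω̃ ∈ ℝ with ω ≠ 0 and ω̃ ≠ 0, and let y, ỹ ∈ ℝ³ with y₃ > 0, ỹ₃ > 0, y ≠ (0,0,r), ỹ ≠ (0,0,r̃). Write S = (s₁,s₂,0), R = (0,0,r), A = ‖y−S‖, B = ‖y−R‖, and define Φ(s₁,s₂,r,y,ω) = (s₁, s₂, r, A+B, ω(y₁−s₁)/A, ω(y₂−s₂)/A, ω(y₃−r)/B, ω) ∈ ℝ⁸ (and likewise for the tilde variables). Suppose Φ(s₁,s₂,r,y,ω) = Φ(s̃₁,s̃₂,r̃,ỹ,ω̃), and suppose the closed segment joining y and ỹ is disjoint from the closed segment joining S = (s₁,s₂,0) and R = (0,0,r). Then (s₁,s₂,r,y,ω) = (s̃₁,s̃₂,r̃,ỹ,ω̃). -/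
/-!
Equal `ω` and equal horizontal slowness components force the unit vectors from the source `S` to
`y` and to `ỹ` to agree: they are unit vectors differing at most in their third coordinate, which
is positive for both since `S` lies on the surface. So `y` and `ỹ` lie on one ray from the focus
`S`, and they lie on one ellipsoid with foci `S` and `R` (equal traveltimes `A + B`). Along a ray
from `S` the traveltime is nondecreasing, and it is constant between two points only where the
triangle inequality through `R` is an equality; by strict convexity this puts the farther of the
two points on the segment `[S, R]`, which the disjointness hypothesis rules out.
-/

/-- The left projection `π_L` of the canonical relation for the dense-array
borehole geometry with constant background sound speed `c₀ = 1`: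
`Φ(s₁,s₂,r,y,ω) = (s₁, s₂, r, A+B, ω(y₁−s₁)/A, ω(y₂−s₂)/A, ω(y₃−r)/B, ω) ∈ ℝ⁸`,
where `S = (s₁,s₂,0)`, `R = (0,0,r)`, `A = ‖y−S‖`, `B = ‖y−R‖`. -/
noncomputable def denseArrayPiL (s₁ s₂ r : ℝ) (y : EuclideanSpace ℝ (Fin 3)) (ω : ℝ) :
    Fin 8 → ℝ :=
  let S : EuclideanSpace ℝ (Fin 3) := WithLp.toLp 2 ![s₁, s₂, 0]
  let R : EuclideanSpace ℝ (Fin 3) := WithLp.toLp 2 ![0, 0, r]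
  let A : ℝ := ‖y - S‖
  let B : ℝ := ‖y - R‖
  ![s₁, s₂, r, A + B, ω * (y 0 - s₁) / A, ω * (y 1 - s₂) / A, ω * (y 2 - r) / B, ω]

namespace EuclideanSpace

variable {ι : Type*} [Fintype ι] [DecidableEq ι]

theorem eq_of_norm_eq_of_forall_ne_eq {u v : EuclideanSpace ℝ ι} (j : ι) (hnorm : ‖u‖ = ‖v‖)
    (hoff : ∀ i ≠ j, u i = v i) (hu : 0 ≤ u j) (hv : 0 ≤ v j) : u = v := by
  have hsq : ∑ i, u i ^ 2 = ∑ i, v i ^ 2 := by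
    rw [← real_norm_sq_eq, ← real_norm_sq_eq, hnorm]
  have hrest : ∑ i ∈ Finset.univ.erase j, u i ^ 2 = ∑ i ∈ Finset.univ.erase j, v i ^ 2 :=
    Finset.sum_congr rfl fun i hi => by rw [hoff i (Finset.ne_of_mem_erase hi)]
  rw [← Finset.add_sum_erase _ _ (Finset.mem_univ j),
    ← Finset.add_sum_erase _ _ (Finset.mem_univ j), hrest, add_left_inj] at hsq
  have hj : u j = v j := (sq_eq_sq₀ hu hv).mp hsq
  ext i
  by_cases hi : i = j
  · rw [hi, hj]
  · exact hoff i hi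

theorem sameRay_of_forall_ne_div_norm_eq {u v : EuclideanSpace ℝ ι} (j : ι)
    (hoff : ∀ i ≠ j, u i / ‖u‖ = v i / ‖v‖) (hu : 0 ≤ u j) (hv : 0 ≤ v j) : SameRay ℝ u v := by
  rcases eq_or_ne u 0 with rfl | hu0
  · exact SameRay.zero_left v
  rcases eq_or_ne v 0 with rfl | hv0
  · exact SameRay.zero_right u
  rw [sameRay_iff_inv_norm_smul_eq_of_ne hu0 hv0]
  refine eq_of_norm_eq_of_forall_ne_eq j ?_ (fun i hi => ?_) ?_ ?_
  · simp [norm_smul, hu0, hv0]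
  · simpa only [PiLp.smul_apply, smul_eq_mul, inv_mul_eq_div] using hoff i hi
  · simp only [PiLp.smul_apply, smul_eq_mul]; positivity
  · simp only [PiLp.smul_apply, smul_eq_mul]; positivity

end EuclideanSpace

section StrictConvex

variable {V P : Type*} [NormedAddCommGroup V] [NormedSpace ℝ V] [StrictConvexSpace ℝ V]
  [MetricSpace P] [NormedAddTorsor V P]

theorem Wbtw.wbtw_of_dist_add_dist_eq {S R x y : P} (h : Wbtw ℝ S x y)
    (hsum : dist S x + dist x R = dist S y + dist y R) (hxy : x ≠ y) : Wbtw ℝ S y R := by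
  have hxyR : Wbtw ℝ x y R := by
    rw [← dist_add_dist_eq_iff]
    linarith [dist_add_dist_eq_iff.mpr h]
  exact h.trans_expand_right hxyR hxy

end StrictConvex

theorem denseArray_piL_injective_general
    (s₁ s₂ r ω t₁ t₂ r' ω' : ℝ) (hω : ω ≠ 0)
    (y y' : EuclideanSpace ℝ (Fin 3)) (hy3 : y 2 > 0) (hy'3 : y' 2 > 0)
    (hΦ : denseArrayPiL s₁ s₂ r y ω = denseArrayPiL t₁ t₂ r' y' ω')
    (hdisj : Disjoint (segment ℝ y y')
      (segment ℝ (WithLp.toLp 2 ![s₁, s₂, 0] : EuclideanSpace ℝ (Fin 3))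
        (WithLp.toLp 2 ![0, 0, r] : EuclideanSpace ℝ (Fin 3)))) :
    s₁ = t₁ ∧ s₂ = t₂ ∧ r = r' ∧ y = y' ∧ ω = ω' := by
  obtain ⟨rfl, rfl, rfl, rfl⟩ : s₁ = t₁ ∧ s₂ = t₂ ∧ r = r' ∧ ω = ω' :=
    ⟨congrFun hΦ 0, congrFun hΦ 1, congrFun hΦ 2, congrFun hΦ 7⟩
  refine ⟨rfl, rfl, rfl, ?_, rfl⟩
  set S : EuclideanSpace ℝ (Fin 3) := WithLp.toLp 2 ![s₁, s₂, 0]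
  set R : EuclideanSpace ℝ (Fin 3) := WithLp.toLp 2 ![0, 0, r]
  have hsum : dist S y + dist y R = dist S y' + dist y' R := by
    simpa [denseArrayPiL, dist_eq_norm, norm_sub_rev S] using congrFun hΦ 3
  have hray : SameRay ℝ (y - S) (y' - S) := by
    refine EuclideanSpace.sameRay_of_forall_ne_div_norm_eq 2 (fun i hi => ?_) ?_ ?_
    fin_cases i
    · simpa [denseArrayPiL, S, mul_div_assoc, hω] using congrFun hΦ 4
    · simpa [denseArrayPiL, S, mul_div_assoc, hω] using congrFun hΦ 5
    · exact absurd rfl hi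
    · simpa [S] using hy3.le
    · simpa [S] using hy'3.le
  have hSR : ∀ z ∈ segment ℝ y y', ¬ Wbtw ℝ S z R := fun z hz hzSR =>
    Set.disjoint_left.mp hdisj hz hzSR.mem_segment
  by_contra hne
  rcases wbtw_total_of_sameRay_vsub_left (x := S) (y := y) (z := y') hray with h | h
  · exact hSR y' (right_mem_segment ℝ y y') (h.wbtw_of_dist_add_dist_eq hsum hne)
  · exact hSR y (left_mem_segment ℝ y y') (h.wbtw_of_dist_add_dist_eq hsum.symm (Ne.symm hne))

/-- Global injectivity of the left projection for the dense-array borehole data set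
(the Traveltime Injectivity Condition), constant background sound speed. -/
theorem denseArray_piL_injective
    (s₁ s₂ r ω t₁ t₂ r' ω' : ℝ) (hω : ω ≠ 0) (hω' : ω' ≠ 0)
    (y y' : EuclideanSpace ℝ (Fin 3)) (hy3 : y 2 > 0) (hy'3 : y' 2 > 0)
    (hyR : y ≠ ![0, 0, r]) (hy'R : y' ≠ ![0, 0, r'])
    (hΦ : denseArrayPiL s₁ s₂ r y ω = denseArrayPiL t₁ t₂ r' y' ω')
    (hdisj : Disjoint (segment ℝ y y')
      (segment ℝ (WithLp.toLp 2 ![s₁, s₂, 0] : EuclideanSpace ℝ (Fin 3))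
        (WithLp.toLp 2 ![0, 0, r] : EuclideanSpace ℝ (Fin 3)))) :
    s₁ = t₁ ∧ s₂ = t₂ ∧ r = r' ∧ y = y' ∧ ω = ω' :=
  denseArray_piL_injective_general s₁ s₂ r ω t₁ t₂ r' ω' hω y y' hy3 hy'3 hΦ hdisj
end

section
/- Let s₁, s₂, r, ω ∈ ℝ and y ∈ ℝ³ with y ≠ S and y ≠ R, where S = (s₁,s₂,0) and R = (0,0,r). Set A = ‖y−S‖ and B = ‖y−R‖. Then the determinant of the 3×3 real matrix with rows (−((y₂−s₂)²+y₃²)ω/A³, (y₁−s₁)(y₂−s₂)ω/A³, (y₁−s₁)/A + y₁/B), ((y₁−s₁)(y₂−s₂)ω/A³, −((y₁−s₁)²+y₃²)ω/A³, (y₂−s₂)/A + y₂/B), and (y₃(y₁−s₁)ω/A³, (y₂−s₂)y₃ω/A³, y₃/A + (y₃−r)/B) equals ω²·y₃·A⁻³·(1 + ⟨y−S, y−R⟩/(A·B)), where ⟨·,·⟩ is the Euclidean inner product on ℝ³. -/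
/-!
With `u = y - S`, the first two columns are `(ω/A³)(u uᵀ - ‖u‖² I) eⱼ` for `j = 0, 1`, and the
third is `w = u/A + (y - R)/B`. Expanding multilinearly, the rank-one parts pair off and the
determinant collapses to `(ω/A³)² ‖u‖² u₂ ⟨u, w⟩`; then `‖u‖ = A`, `u₂ = y₂` and
`⟨u, w⟩ = A + ⟨u, y - R⟩/B`.
-/

open Matrix

theorem det_fin_three_of_rankOne_sub_columns {R : Type*} [CommRing R] (c : R) (u w : Fin 3 → R) :
    !![c * (u 0 * u 0 - u ⬝ᵥ u), c * (u 0 * u 1), w 0;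
       c * (u 1 * u 0), c * (u 1 * u 1 - u ⬝ᵥ u), w 1;
       c * (u 2 * u 0), c * (u 2 * u 1), w 2].det
      = c ^ 2 * (u ⬝ᵥ u) * u 2 * (u ⬝ᵥ w) := by
  simp only [det_fin_three, dotProduct, Fin.sum_univ_three, of_apply, cons_val', cons_val_zero,
    cons_val_one, cons_val_two, empty_val', cons_val_fin_one, head_cons, tail_cons, head_fin_const]
  ring

theorem EuclideanSpace.real_inner_eq_dotProduct {ι : Type*} [Fintype ι]
    (x y : EuclideanSpace ℝ ι) : inner ℝ x y = x.ofLp ⬝ᵥ y.ofLp := by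
  simp [EuclideanSpace.inner_eq_star_dotProduct, dotProduct_comm]

theorem denseArray_det_dpiR_general
    (s₁ s₂ r ω : ℝ) (y S R : EuclideanSpace ℝ (Fin 3))
    (hS : S = ![s₁, s₂, 0]) (hR : R = ![0, 0, r])
    (A B : ℝ) (hA : A = ‖y - S‖) :
    (!![-((y 1 - s₂) ^ 2 + (y 2) ^ 2) * ω / A ^ 3,
        (y 0 - s₁) * (y 1 - s₂) * ω / A ^ 3,
        (y 0 - s₁) / A + y 0 / B;
        (y 0 - s₁) * (y 1 - s₂) * ω / A ^ 3,
        -((y 0 - s₁) ^ 2 + (y 2) ^ 2) * ω / A ^ 3,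
        (y 1 - s₂) / A + y 1 / B;
        y 2 * (y 0 - s₁) * ω / A ^ 3,
        (y 1 - s₂) * y 2 * ω / A ^ 3,
        y 2 / A + (y 2 - r) / B]).det
      = ω ^ 2 * y 2 * (A ^ 3)⁻¹ * (1 + (inner ℝ (y - S) (y - R) : ℝ) / (A * B)) := by
  set u := y - S
  set w := A⁻¹ • u + B⁻¹ • (y - R)
  have hu2 : u 2 = y 2 := by simp [u, hS]
  calc _ = det !![ω / A ^ 3 * (u 0 * u 0 - u ⬝ᵥ u), ω / A ^ 3 * (u 0 * u 1), w 0;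
        ω / A ^ 3 * (u 1 * u 0), ω / A ^ 3 * (u 1 * u 1 - u ⬝ᵥ u), w 1;
        ω / A ^ 3 * (u 2 * u 0), ω / A ^ 3 * (u 2 * u 1), w 2] := by
        congr 1
        ext i j
        fin_cases i <;> fin_cases j <;>
          simp [u, w, hS, hR, dotProduct, Fin.sum_univ_three, div_eq_inv_mul] <;> ring
    _ = (ω / A ^ 3) ^ 2 * A ^ 2 * y 2 * (A⁻¹ * A ^ 2 + B⁻¹ * inner ℝ u (y - R)) := by
        rw [det_fin_three_of_rankOne_sub_columns, ← EuclideanSpace.real_inner_eq_dotProduct,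
          ← EuclideanSpace.real_inner_eq_dotProduct, real_inner_self_eq_norm_sq, inner_add_right,
          real_inner_smul_right, real_inner_smul_right, real_inner_self_eq_norm_sq, hu2, ← hA]
    _ = _ := by
        rcases eq_or_ne A 0 with hA0 | hA0
        · simp [hA0]
        · field_simp

/-- Determinant of the Jacobian `Dη/D(s₁,s₂,ω)` of the frequency part of the right
projection `π_R` for the dense-array borehole geometry, constant background sound speed:
it equals `ω² y₃ A⁻³ (1 + ⟨y−S, y−R⟩/(AB))`. -/
theorem denseArray_det_dpiR
    (s₁ s₂ r ω : ℝ) (y S R : EuclideanSpace ℝ (Fin 3))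
    (hS : S = ![s₁, s₂, 0]) (hR : R = ![0, 0, r])
    (hyS : y ≠ S) (hyR : y ≠ R)
    (A B : ℝ) (hA : A = ‖y - S‖) (hB : B = ‖y - R‖) :
    (!![-((y 1 - s₂) ^ 2 + (y 2) ^ 2) * ω / A ^ 3,
        (y 0 - s₁) * (y 1 - s₂) * ω / A ^ 3,
        (y 0 - s₁) / A + y 0 / B;
        (y 0 - s₁) * (y 1 - s₂) * ω / A ^ 3,
        -((y 0 - s₁) ^ 2 + (y 2) ^ 2) * ω / A ^ 3,
        (y 1 - s₂) / A + y 1 / B;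
        y 2 * (y 0 - s₁) * ω / A ^ 3,
        (y 1 - s₂) * y 2 * ω / A ^ 3,
        y 2 / A + (y 2 - r) / B]).det
      = ω ^ 2 * y 2 * (A ^ 3)⁻¹ * (1 + (inner ℝ (y - S) (y - R) : ℝ) / (A * B)) :=
  denseArray_det_dpiR_general s₁ s₂ r ω y S R hS hR A B hA
end

section
/- Let s₁, s₂, r, ω ∈ ℝ and y ∈ ℝ³ with ω ≠ 0, y₃ > 0, and y ≠ R, where S = (s₁,s₂,0) and R = (0,0,r). Set A = ‖y−S‖, B = ‖y−R‖, and suppose (y−S)/A + (y−R)/B ≠ 0. Then the determinant of the 3×3 matrix with rows (−((y₂−s₂)²+y₃²)ω/A³, (y₁−s₁)(y₂−s₂)ω/A³, (y₁−s₁)/A + y₁/B), ((y₁−s₁)(y₂−s₂)ω/A³, −((y₁−s₁)²+y₃²)ω/A³, (y₂−s₂)/A + y₂/B), (y₃(y₁−s₁)ω/A³, (y₂−s₂)y₃ω/A³, y₃/A + (y₃−r)/B) is nonzero. -/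
/-!
Write `u = y − S`, `v = y − R` and `w = u/A + v/B`. The first two columns of the matrix are
`ω/A³ (u₁u − A²e₁)` and `ω/A³ (u₂u − A²e₂)`, and the third is `w`; expanding multilinearly,
the determinant is `ω² y₃ ⟪u, w⟫ / A⁴`. Put `p = u/A`, a unit vector, and `q = v/B`, of norm
at most `1` (it is `0` when `v = 0`, since `0⁻¹ = 0`). Then
`2⟪p, p + q⟫ = ‖p + q‖² + ‖p‖² − ‖q‖² ≥ ‖p + q‖²`, which is positive because `w = p + q ≠ 0`.
Hence `⟪u, w⟫ = A⟪p, p + q⟫ > 0`.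
-/

open scoped RealInnerProductSpace

theorem inner_add_pos_of_norm_le {F : Type*} [NormedAddCommGroup F] [InnerProductSpace ℝ F]
    {p q : F} (hqp : ‖q‖ ≤ ‖p‖) (hpq : p + q ≠ 0) : 0 < ⟪p, p + q⟫ := by
  have hsq := norm_add_sq_real p q
  have hpos : 0 < ‖p + q‖ := norm_pos_iff.2 hpq
  rw [inner_add_right, real_inner_self_eq_norm_sq]
  nlinarith [norm_nonneg q]

theorem norm_inv_norm_smul_le_one {F : Type*} [NormedAddCommGroup F] [NormedSpace ℝ F] (v : F) :
    ‖‖v‖⁻¹ • v‖ ≤ 1 := by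
  rw [norm_smul, norm_inv, norm_norm]
  exact inv_mul_le_one

theorem inner_inv_norm_smul_add_pos {F : Type*} [NormedAddCommGroup F] [InnerProductSpace ℝ F]
    {u : F} (hu : u ≠ 0) (v : F) (h : ‖u‖⁻¹ • u + ‖v‖⁻¹ • v ≠ 0) :
    0 < ⟪u, ‖u‖⁻¹ • u + ‖v‖⁻¹ • v⟫ := by
  have hu_pos : 0 < ‖u‖ := norm_pos_iff.2 hu
  have hunit : ‖‖u‖⁻¹ • u‖ = 1 := norm_smul_inv_norm hu
  have key := inner_add_pos_of_norm_le (hunit ▸ norm_inv_norm_smul_le_one v) h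
  rw [inner_smul_left] at key
  simpa [hu_pos] using key

theorem det_fin_three_scaled_projections (a b c ω A w₀ w₁ w₂ : ℝ) :
    (!![-(b ^ 2 + c ^ 2) * ω / A ^ 3, a * b * ω / A ^ 3, w₀;
        a * b * ω / A ^ 3, -(a ^ 2 + c ^ 2) * ω / A ^ 3, w₁;
        c * a * ω / A ^ 3, b * c * ω / A ^ 3, w₂]).det
      = ω ^ 2 * c * (a ^ 2 + b ^ 2 + c ^ 2) * (a * w₀ + b * w₁ + c * w₂) / A ^ 6 := by
  rw [Matrix.det_fin_three]
  simp only [Matrix.of_apply, Matrix.cons_val', Matrix.cons_val_zero, Matrix.cons_val_fin_one,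
    Matrix.cons_val_one, Matrix.cons_val]
  ring

theorem denseArray_det_dpiR_ne_zero_general
    (s₁ s₂ r ω : ℝ) (hω : ω ≠ 0) (y S R : EuclideanSpace ℝ (Fin 3))
    (hS : S = ![s₁, s₂, 0]) (hR : R = ![0, 0, r])
    (hy3 : y 2 > 0)
    (A B : ℝ) (hA : A = ‖y - S‖) (hB : B = ‖y - R‖)
    (hnoπ : A⁻¹ • (y - S) + B⁻¹ • (y - R) ≠ 0) :
    (!![-((y 1 - s₂) ^ 2 + (y 2) ^ 2) * ω / A ^ 3,
        (y 0 - s₁) * (y 1 - s₂) * ω / A ^ 3,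
        (y 0 - s₁) / A + y 0 / B;
        (y 0 - s₁) * (y 1 - s₂) * ω / A ^ 3,
        -((y 0 - s₁) ^ 2 + (y 2) ^ 2) * ω / A ^ 3,
        (y 1 - s₂) / A + y 1 / B;
        y 2 * (y 0 - s₁) * ω / A ^ 3,
        (y 1 - s₂) * y 2 * ω / A ^ 3,
        y 2 / A + (y 2 - r) / B]).det ≠ 0 := by
  have hyS : y - S ≠ 0 := fun h ↦ by
    have h2 : (y - S) 2 = 0 := by rw [h]; rfl
    linarith [show y 2 = 0 by simpa [hS] using h2]
  have hinner := inner_inv_norm_smul_add_pos hyS (y - R) (hA ▸ hB ▸ hnoπ)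
  rw [← hA, ← hB] at hinner
  have hinner_coord : ⟪y - S, A⁻¹ • (y - S) + B⁻¹ • (y - R)⟫
      = (y 0 - s₁) * ((y 0 - s₁) / A + y 0 / B) + (y 1 - s₂) * ((y 1 - s₂) / A + y 1 / B)
        + y 2 * (y 2 / A + (y 2 - r) / B) := by
    simp only [PiLp.inner_apply, PiLp.sub_apply, PiLp.add_apply, PiLp.smul_apply, smul_eq_mul,
      RCLike.inner_apply, Real.ringHom_apply, Fin.sum_univ_three, hS, hR, Matrix.cons_val_zero,
      Matrix.cons_val_one, Matrix.cons_val, sub_zero]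
    ring
  have hA_sq : A ^ 2 = (y 0 - s₁) ^ 2 + (y 1 - s₂) ^ 2 + y 2 ^ 2 := by
    simp [hA, EuclideanSpace.norm_sq_eq, Fin.sum_univ_three, hS]
  have hA_pos : 0 < A := hA ▸ norm_pos_iff.2 hyS
  rw [det_fin_three_scaled_projections, ← hA_sq, ← hinner_coord]
  positivity

/-- Nonvanishing of the determinant of the Jacobian `Dη/D(s₁,s₂,ω)` of the right
projection `π_R` for the dense-array borehole geometry (constant background sound speed),
under the no-scattering-over-π condition `(y−S)/A + (y−R)/B ≠ 0`. -/
theorem denseArray_det_dpiR_ne_zero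
    (s₁ s₂ r ω : ℝ) (hω : ω ≠ 0) (y S R : EuclideanSpace ℝ (Fin 3))
    (hS : S = ![s₁, s₂, 0]) (hR : R = ![0, 0, r])
    (hy3 : y 2 > 0) (hyR : y ≠ R)
    (A B : ℝ) (hA : A = ‖y - S‖) (hB : B = ‖y - R‖)
    (hnoπ : A⁻¹ • (y - S) + B⁻¹ • (y - R) ≠ 0) :
    (!![-((y 1 - s₂) ^ 2 + (y 2) ^ 2) * ω / A ^ 3,
        (y 0 - s₁) * (y 1 - s₂) * ω / A ^ 3,
        (y 0 - s₁) / A + y 0 / B;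
        (y 0 - s₁) * (y 1 - s₂) * ω / A ^ 3,
        -((y 0 - s₁) ^ 2 + (y 2) ^ 2) * ω / A ^ 3,
        (y 1 - s₂) / A + y 1 / B;
        y 2 * (y 0 - s₁) * ω / A ^ 3,
        (y 1 - s₂) * y 2 * ω / A ^ 3,
        y 2 / A + (y 2 - r) / B]).det ≠ 0 :=
  denseArray_det_dpiR_ne_zero_general s₁ s₂ r ω hω y S R hS hR hy3 A B hA hB hnoπ
end

section
/- Let S, R, y, ỹ ∈ ℝ³ with y ≠ S and ỹ ≠ S. Suppose (y−S)/‖y−S‖ = (ỹ−S)/‖ỹ−S‖ (y and ỹ lie on a common ray emanating from S), suppose the closed segment joining y and ỹ is disjoint from the closed segment joining S and R, and suppose ‖y−S‖ + ‖y−R‖ = ‖ỹ−S‖ + ‖ỹ−R‖. Then y = ỹ. -/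
/-- The traveltime injectivity step: two points on a common ray from the source `S`,
with equal two-way traveltime `‖·−S‖ + ‖·−R‖`, whose joining segment avoids the
segment from `S` to the receiver `R`, must coincide. -/
theorem eq_of_common_ray_of_traveltime_eq
    (S R y y' : EuclideanSpace ℝ (Fin 3)) (hyS : y ≠ S) (hy'S : y' ≠ S)
    (hray : ‖y - S‖⁻¹ • (y - S) = ‖y' - S‖⁻¹ • (y' - S))
    (hdisj : Disjoint (segment ℝ y y') (segment ℝ S R))
    (hT : ‖y - S‖ + ‖y - R‖ = ‖y' - S‖ + ‖y' - R‖) :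
    y = y' := by
  wlog hab : ‖y - S‖ ≤ ‖y' - S‖ with H
  · exact (H S R y' y hy'S hyS hray.symm (by rwa [segment_symm]) hT.symm
      (le_of_not_ge hab)).symm
  by_cases hyy' : y = y'
  · exact hyy'
  set a := ‖y - S‖ with ha_def
  set b := ‖y' - S‖ with hb_def
  have ha : 0 < a := norm_pos_iff.mpr (sub_ne_zero.mpr hyS)
  have hb : 0 < b := norm_pos_iff.mpr (sub_ne_zero.mpr hy'S)
  set u : EuclideanSpace ℝ (Fin 3) := a⁻¹ • (y - S) with hu_def
  have hy : y - S = a • u := (smul_inv_smul₀ ha.ne' _).symm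
  have hy' : y' - S = b • u := by
    rw [hray, smul_inv_smul₀ hb.ne']
  have hnu : ‖u‖ = 1 := by
    rw [hu_def, norm_smul, norm_inv, norm_norm]
    exact inv_mul_cancel₀ ha.ne'
  have hy'y : y' - y = (b - a) • u := by
    have : y' - y = (y' - S) - (y - S) := by abel
    rw [this, hy, hy', ← sub_smul]
  have hdist : ‖y' - y‖ = b - a := by
    rw [hy'y, norm_smul, hnu, mul_one, Real.norm_eq_abs, abs_of_nonneg (by linarith)]
  have hab' : a < b := by
    rcases lt_or_eq_of_le hab with h | h
    · exact h
    · exfalso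
      apply hyy'
      have : ‖y' - y‖ = 0 := by rw [hdist, ← h, sub_self]
      have := norm_eq_zero.mp this
      rw [sub_eq_zero] at this
      exact this.symm
  -- triangle equality: y' lies between y and R
  have htri : dist y y' + dist y' R = dist y R := by
    have h1 : dist y y' = b - a := by rw [dist_eq_norm, norm_sub_rev, hdist]
    have h2 : dist y' R = ‖y' - R‖ := dist_eq_norm _ _
    have h3 : dist y R = ‖y - R‖ := dist_eq_norm _ _
    rw [h1, h2, h3]; linarith
  have hw : Wbtw ℝ y y' R := dist_add_dist_eq_iff.mp htri
  obtain ⟨t, ht, hty⟩ := hw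
  have hty' : t • (R - y) = (b - a) • u := by
    have := hty
    simp only [AffineMap.lineMap_apply_module] at this
    have h4 : t • (R - y) = y' - y := by
      have : (1 - t) • y + t • R = y' := this
      have h5 : y' - y = (1 - t) • y + t • R - y := by rw [this]
      rw [h5]; module
    rw [h4, hy'y]
  have ht0 : t ≠ 0 := by
    intro h
    rw [h, zero_smul] at hty'
    have : (b - a) • u = (0 : EuclideanSpace ℝ (Fin 3)) := hty'.symm
    rcases smul_eq_zero.mp this with h' | h'
    · linarith [sub_eq_zero.mp (by linarith [h'] : b - a = 0)]
    · rw [h'] at hnu; simp at hnu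
  have htpos : 0 < t := lt_of_le_of_ne ht.1 (Ne.symm ht0)
  have hR : R - y = (t⁻¹ * (b - a)) • u := by
    have := congrArg (fun z => t⁻¹ • z) hty'
    simp only [smul_smul, inv_mul_cancel₀ ht0, one_smul] at this
    rw [this, smul_smul]
  have hpos' : 0 < t⁻¹ * (b - a) := mul_pos (inv_pos.mpr htpos) (by linarith)
  set c : ℝ := t⁻¹ * (b - a) + a with hc_def
  have hcpos : 0 < c := by rw [hc_def]; linarith
  have hac : a ≤ c := by rw [hc_def]; linarith
  have hRS : R - S = c • u := by
    have : R - S = (R - y) + (y - S) := by abel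
    rw [this, hR, hy, ← add_smul]
  -- y lies on segment S R
  have hymem : y ∈ segment ℝ S R := by
    have h01 : a / c ≤ 1 := (div_le_one hcpos).mpr hac
    have h02 : 0 ≤ a / c := by positivity
    refine ⟨1 - a / c, a / c, by linarith, h02, by ring, ?_⟩
    have hyeq : y = S + (a / c) • (R - S) := by
      rw [hRS, smul_smul, div_mul_cancel₀ a hcpos.ne']
      rw [← hy]; abel
    rw [hyeq]; module
  exact (Set.disjoint_left.mp hdisj (left_mem_segment ℝ y y') hymem).elim
end

section
/- Let s₀, s, r, ω ∈ ℝ with ω ≠ 0 and s₀ ≠ 0, and let y ∈ ℝ³ with y ≠ S and y ≠ R, where S = (s₀, 0, s) and R = (0, 0, r); set A = ‖y−S‖, B = ‖y−R‖. Then the determinant of the 3×3 matrix with rows ((y₁−s₀)/A + y₁/B, y₂/A + y₂/B, (y₃−s)/A + (y₃−r)/B), (−(y₃−s)(y₁−s₀)ω/A³, −(y₃−s)y₂ω/A³, ((y₁−s₀)²+y₂²)ω/A³), (−(y₃−r)y₁ω/B³, −(y₃−r)y₂ω/B³, (y₁²+y₂²)ω/B³) vanishes if and only if y₂ = 0 or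 (y₃−s)/A + (y₃−r)/B = 0. -/
/-! With `a = (y - S)/A` and `b = (y - R)/B` the unit vectors from the source and the receiver
and `e₃` the borehole direction, the rows of the matrix are `a + b`, `(ω/A)(e₃ - a₃ a)` and
`(ω/B)(e₃ - b₃ b)`. Expanding multilinearly, the terms with `e₃` twice or with all of `a + b`,
`a`, `b` vanish, leaving `-(ω²/AB)(a₃ + b₃) det(a, e₃, b)`. The last determinant is `s₀ y₂ / AB`,
since both boreholes are vertical and `R` lies on the `x₃`-axis. -/

theorem crosswell_jacobian_det_eq (u₁ u₂ u₃ v₁ v₂ v₃ ω A B : ℝ) (hA0 : A ≠ 0) (hB0 : B ≠ 0)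
    (hA : A ^ 2 = u₁ ^ 2 + u₂ ^ 2 + u₃ ^ 2) (hB : B ^ 2 = v₁ ^ 2 + v₂ ^ 2 + v₃ ^ 2) :
    (!![u₁ / A + v₁ / B, u₂ / A + v₂ / B, u₃ / A + v₃ / B;
        -(u₃ * u₁) * ω / A ^ 3, -(u₃ * u₂) * ω / A ^ 3, (u₁ ^ 2 + u₂ ^ 2) * ω / A ^ 3;
        -(v₃ * v₁) * ω / B ^ 3, -(v₃ * v₂) * ω / B ^ 3, (v₁ ^ 2 + v₂ ^ 2) * ω / B ^ 3]).det
      = ω ^ 2 * (u₁ * v₂ - u₂ * v₁) * (u₃ / A + v₃ / B) / (A ^ 2 * B ^ 2) := by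
  rw [show u₁ ^ 2 + u₂ ^ 2 = A ^ 2 - u₃ ^ 2 by linarith,
    show v₁ ^ 2 + v₂ ^ 2 = B ^ 2 - v₃ ^ 2 by linarith, Matrix.det_fin_three]
  simp only [Matrix.of_apply, Matrix.cons_val', Matrix.cons_val_zero, Matrix.cons_val_one,
    Matrix.head_cons, Matrix.empty_val', Matrix.cons_val_fin_one, Matrix.cons_val_two,
    Matrix.head_fin_const, Matrix.tail_cons]
  field_simp
  ring

theorem EuclideanSpace.real_norm_sq_eq_fin_three (x : EuclideanSpace ℝ (Fin 3)) :
    ‖x‖ ^ 2 = x 0 ^ 2 + x 1 ^ 2 + x 2 ^ 2 := by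
  rw [EuclideanSpace.real_norm_sq_eq, Fin.sum_univ_three]

/-- Characterization of the critical set of the left projection `π_L` for the
crosswell geometry: the Jacobian determinant vanishes iff `y₂ = 0` (the surface `Σ¹`)
or `(y₃−s)/A + (y₃−r)/B = 0` (the surface `Σ²`). -/
theorem crosswell_det_dpiL_eq_zero_iff
    (s₀ s r ω : ℝ) (hω : ω ≠ 0) (hs₀ : s₀ ≠ 0) (y S R : EuclideanSpace ℝ (Fin 3))
    (hS : S = ![s₀, 0, s]) (hR : R = ![0, 0, r])
    (hyS : y ≠ S) (hyR : y ≠ R)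
    (A B : ℝ) (hA : A = ‖y - S‖) (hB : B = ‖y - R‖) :
    (!![(y 0 - s₀) / A + y 0 / B,
        y 1 / A + y 1 / B,
        (y 2 - s) / A + (y 2 - r) / B;
        -((y 2 - s) * (y 0 - s₀)) * ω / A ^ 3,
        -((y 2 - s) * y 1) * ω / A ^ 3,
        ((y 0 - s₀) ^ 2 + (y 1) ^ 2) * ω / A ^ 3;
        -((y 2 - r) * y 0) * ω / B ^ 3,
        -((y 2 - r) * y 1) * ω / B ^ 3,
        ((y 0) ^ 2 + (y 1) ^ 2) * ω / B ^ 3]).det = 0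
      ↔ y 1 = 0 ∨ (y 2 - s) / A + (y 2 - r) / B = 0 := by
  have hA0 : A ≠ 0 := by rw [hA]; exact norm_ne_zero_iff.mpr (sub_ne_zero.mpr hyS)
  have hB0 : B ≠ 0 := by rw [hB]; exact norm_ne_zero_iff.mpr (sub_ne_zero.mpr hyR)
  have hA2 : A ^ 2 = (y 0 - s₀) ^ 2 + y 1 ^ 2 + (y 2 - s) ^ 2 := by
    simp [hA, hS, EuclideanSpace.real_norm_sq_eq_fin_three]
  have hB2 : B ^ 2 = y 0 ^ 2 + y 1 ^ 2 + (y 2 - r) ^ 2 := by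
    simp [hB, hR, EuclideanSpace.real_norm_sq_eq_fin_three]
  rw [crosswell_jacobian_det_eq _ _ _ _ _ _ ω A B hA0 hB0 hA2 hB2,
    show (y 0 - s₀) * y 1 - y 1 * y 0 = -(s₀ * y 1) by ring]
  simp [hω, hs₀, hA0, hB0]
end

section
/- Let s, r, ω ∈ ℝ, and let y ∈ ℝ³ with y ≠ S and y ≠ R, where S = (s, 0, 0) and R = (0, 0, r). Set A = ‖y−S‖ and B = ‖y−R‖. Then the determinant of the 3×3 real matrix with rows (−(y₂²+y₃²)ω/A³, y₁(y₃−r)ω/B³, (y₁−s)/A + y₁/B), (y₂(y₁−s)ω/A³, y₂(y₃−r)ω/B³, y₂/A + y₂/B), and (y₃(y₁−s)ω/A³, −(y₁²+y₂²)ω/B³, y₃/A + (y₃−r)/B) equals −(ω²·y₂/(A²B²))·((y₁(y₁−s)+y₂²+y₃²)/A + (y₁²+y₂²+y₃(y₃−r))/B), and the expression in the last parentheses equals ⟨y, (y−S)/A + (y−R)/B⟩. -/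
/-!
Expanding along the first row and clearing the denominators `A³B³` leaves a polynomial identity
that holds modulo the relations `A² = (y₁ - s)² + y₂² + y₃²` and `B² = y₁² + y₂² + (y₃ - r)²`.
The second claim is bilinearity of the inner product, evaluated in coordinates.
-/

namespace EuclideanSpace

lemma norm_sq_fin_three (x : EuclideanSpace ℝ (Fin 3)) :
    ‖x‖ ^ 2 = x 0 ^ 2 + x 1 ^ 2 + x 2 ^ 2 := by
  simp only [norm_sq_eq, Fin.sum_univ_three, Real.norm_eq_abs, sq_abs]

lemma real_inner_fin_three (x y : EuclideanSpace ℝ (Fin 3)) :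
    inner ℝ x y = x 0 * y 0 + x 1 * y 1 + x 2 * y 2 := by
  simp only [PiLp.inner_apply, Fin.sum_univ_three, RCLike.inner_apply, conj_trivial]
  ring

end EuclideanSpace

theorem walkaway_jacobian_det {s r ω y₀ y₁ y₂ A B : ℝ} (hA : A ≠ 0) (hB : B ≠ 0)
    (hA2 : A ^ 2 = (y₀ - s) ^ 2 + y₁ ^ 2 + y₂ ^ 2)
    (hB2 : B ^ 2 = y₀ ^ 2 + y₁ ^ 2 + (y₂ - r) ^ 2) :
    (!![-(y₁ ^ 2 + y₂ ^ 2) * ω / A ^ 3, y₀ * (y₂ - r) * ω / B ^ 3, (y₀ - s) / A + y₀ / B;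
        y₁ * (y₀ - s) * ω / A ^ 3, y₁ * (y₂ - r) * ω / B ^ 3, y₁ / A + y₁ / B;
        y₂ * (y₀ - s) * ω / A ^ 3, -(y₀ ^ 2 + y₁ ^ 2) * ω / B ^ 3, y₂ / A + (y₂ - r) / B]).det
      = -(ω ^ 2 * y₁ / (A ^ 2 * B ^ 2)) *
          ((y₀ * (y₀ - s) + y₁ ^ 2 + y₂ ^ 2) / A + (y₀ ^ 2 + y₁ ^ 2 + y₂ * (y₂ - r)) / B) := by
  rw [Matrix.det_fin_three]
  simp only [Matrix.of_apply, Matrix.cons_val', Matrix.cons_val_zero, Matrix.cons_val_one,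
    Matrix.cons_val_two, Matrix.empty_val', Matrix.cons_val_fin_one, Matrix.head_cons,
    Matrix.tail_cons, Matrix.head_fin_const]
  field_simp
  linear_combination (ω ^ 2 * y₁ * B * (y₀ ^ 2 + y₁ ^ 2 + y₂ * (y₂ - r))) * hA2
    + (ω ^ 2 * y₁ * A * (y₀ * (y₀ - s) + y₁ ^ 2 + y₂ ^ 2)) * hB2

/-- Determinant of the Jacobian `D(η₁,η₂,η₃)/D(s,r,ω)` of the right projection
`π_R` of the canonical relation for the walkaway geometry with constant background
sound speed, together with the identification of the bracketed factor as
`⟨y, (y−S)/A + (y−R)/B⟩`. -/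
theorem walkaway_det_dpiR
    (s r ω : ℝ) (y S R : EuclideanSpace ℝ (Fin 3))
    (hS : S = ![s, 0, 0]) (hR : R = ![0, 0, r])
    (hyS : y ≠ S) (hyR : y ≠ R)
    (A B : ℝ) (hA : A = ‖y - S‖) (hB : B = ‖y - R‖) :
    (!![-((y 1) ^ 2 + (y 2) ^ 2) * ω / A ^ 3,
        y 0 * (y 2 - r) * ω / B ^ 3,
        (y 0 - s) / A + y 0 / B;
        y 1 * (y 0 - s) * ω / A ^ 3,
        y 1 * (y 2 - r) * ω / B ^ 3,
        y 1 / A + y 1 / B;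
        y 2 * (y 0 - s) * ω / A ^ 3,
        -((y 0) ^ 2 + (y 1) ^ 2) * ω / B ^ 3,
        y 2 / A + (y 2 - r) / B]).det
      = -(ω ^ 2 * y 1 / (A ^ 2 * B ^ 2)) *
          ((y 0 * (y 0 - s) + (y 1) ^ 2 + (y 2) ^ 2) / A
            + ((y 0) ^ 2 + (y 1) ^ 2 + y 2 * (y 2 - r)) / B)
      ∧ (y 0 * (y 0 - s) + (y 1) ^ 2 + (y 2) ^ 2) / A
          + ((y 0) ^ 2 + (y 1) ^ 2 + y 2 * (y 2 - r)) / B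
        = (inner ℝ y (A⁻¹ • (y - S) + B⁻¹ • (y - R)) : ℝ) := by
  have hA0 : A ≠ 0 := hA ▸ norm_ne_zero_iff.mpr (sub_ne_zero.mpr hyS)
  have hB0 : B ≠ 0 := hB ▸ norm_ne_zero_iff.mpr (sub_ne_zero.mpr hyR)
  have hA2 : A ^ 2 = (y 0 - s) ^ 2 + y 1 ^ 2 + y 2 ^ 2 := by
    simp [hA, EuclideanSpace.norm_sq_fin_three, hS]
  have hB2 : B ^ 2 = y 0 ^ 2 + y 1 ^ 2 + (y 2 - r) ^ 2 := by
    simp [hB, EuclideanSpace.norm_sq_fin_three, hR]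
  refine ⟨walkaway_jacobian_det hA0 hB0 hA2 hB2, ?_⟩
  rw [inner_add_right, real_inner_smul_right, real_inner_smul_right,
    EuclideanSpace.real_inner_fin_three, EuclideanSpace.real_inner_fin_three]
  simp only [PiLp.sub_apply, hS, hR, Matrix.cons_val_zero, Matrix.cons_val_one, Matrix.cons_val,
    sub_zero]
  ring
end

section
/- Let s, r, ω ∈ ℝ with ω ≠ 0, and let y ∈ ℝ³ with y ≠ S and y ≠ R, where S = (s, 0, 0) and R = (0, 0, r); set A = ‖y−S‖, B = ‖y−R‖. Then the determinant of the 3×3 matrix with rows (−(y₂²+y₃²)ω/A³, y₁(y₃−r)ω/B³, (y₁−s)/A + y₁/B), (y₂(y₁−s)ω/A³, y₂(y₃−r)ω/B³, y₂/A + y₂/B), (y₃(y₁−s)ω/A³, −(y₁²+y₂²)ω/B³, y₃/A + (y₃−r)/B) vanishes if and only if y₂ = 0 or ⟨y, (y−S)/A + (y−R)/B⟩ = 0, where ⟨·,·⟩ is the Euclidean inner product on ℝ³. -/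
/-! With `a = y - S` and `b = y - R`, the first two columns are `ω ∂ₛ(a/A) = ω (a₀ a - A² e₀)/A³`
and `ω ∂ᵣ(b/B) = ω (b₂ b - B² e₂)/B³`, the third is `a/A + b/B`. Expanding the determinant
multilinearly, all terms but three cancel and it equals
`-(ω/(AB))² y₁ ((A² + s a₀)/A + (B² + r b₂)/B)`, an identity of rational functions once
`-(y₁² + y₂²)` is written as `a₀² - A²` (and likewise for `B`). The last factor is
`⟨y, a/A + b/B⟩`, since `⟨y, a⟩ = ‖a‖² + ⟨S, a⟩ = A² + s a₀`. -/

open RealInnerProductSpace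

theorem det_walkaway_jacobian {K : Type*} [Field K] (s r ω A B y₀ y₁ y₂ : K)
    (hA : A ≠ 0) (hB : B ≠ 0) :
    (!![((y₀ - s) ^ 2 - A ^ 2) * ω / A ^ 3, y₀ * (y₂ - r) * ω / B ^ 3, (y₀ - s) / A + y₀ / B;
        y₁ * (y₀ - s) * ω / A ^ 3, y₁ * (y₂ - r) * ω / B ^ 3, y₁ / A + y₁ / B;
        y₂ * (y₀ - s) * ω / A ^ 3, ((y₂ - r) ^ 2 - B ^ 2) * ω / B ^ 3, y₂ / A + (y₂ - r) / B]).det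
      = -(ω / (A * B)) ^ 2 * y₁ * ((A ^ 2 + s * (y₀ - s)) / A + (B ^ 2 + r * (y₂ - r)) / B) := by
  rw [Matrix.det_fin_three]
  simp only [Matrix.of_apply, Matrix.cons_val', Matrix.cons_val_zero, Matrix.cons_val_one,
    Matrix.cons_val, Matrix.cons_val_fin_one]
  field_simp
  ring

theorem real_inner_inv_norm_smul_sub {E : Type*} [NormedAddCommGroup E] [InnerProductSpace ℝ E]
    (y P : E) :
    ⟪y, ‖y - P‖⁻¹ • (y - P)⟫ = (‖y - P‖ ^ 2 + ⟪P, y - P⟫) / ‖y - P‖ := by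
  rw [real_inner_smul_right, ← real_inner_self_eq_norm_sq, ← inner_add_left, sub_add_cancel,
    inv_mul_eq_div]

/-- Characterization of the critical set of the right projection `π_R` for the
walkaway geometry: the Jacobian determinant vanishes iff `y₂ = 0` (the surface `Σ¹`)
or `⟨y, (y−S)/A + (y−R)/B⟩ = 0` (the surface `Σ²`). -/
theorem walkaway_det_dpiR_eq_zero_iff
    (s r ω : ℝ) (hω : ω ≠ 0) (y S R : EuclideanSpace ℝ (Fin 3))
    (hS : S = ![s, 0, 0]) (hR : R = ![0, 0, r])
    (hyS : y ≠ S) (hyR : y ≠ R)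
    (A B : ℝ) (hA : A = ‖y - S‖) (hB : B = ‖y - R‖) :
    (!![-((y 1) ^ 2 + (y 2) ^ 2) * ω / A ^ 3,
        y 0 * (y 2 - r) * ω / B ^ 3,
        (y 0 - s) / A + y 0 / B;
        y 1 * (y 0 - s) * ω / A ^ 3,
        y 1 * (y 2 - r) * ω / B ^ 3,
        y 1 / A + y 1 / B;
        y 2 * (y 0 - s) * ω / A ^ 3,
        -((y 0) ^ 2 + (y 1) ^ 2) * ω / B ^ 3,
        y 2 / A + (y 2 - r) / B]).det = 0
      ↔ y 1 = 0 ∨ (inner ℝ y (A⁻¹ • (y - S) + B⁻¹ • (y - R)) : ℝ) = 0 := by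
  have hA0 : A ≠ 0 := hA ▸ norm_ne_zero_iff.mpr (sub_ne_zero.mpr hyS)
  have hB0 : B ≠ 0 := hB ▸ norm_ne_zero_iff.mpr (sub_ne_zero.mpr hyR)
  have hA2 : A ^ 2 = (y 0 - s) ^ 2 + y 1 ^ 2 + y 2 ^ 2 := by
    simp [hA, EuclideanSpace.norm_sq_eq, Fin.sum_univ_three, hS]
  have hB2 : B ^ 2 = y 0 ^ 2 + y 1 ^ 2 + (y 2 - r) ^ 2 := by
    simp [hB, EuclideanSpace.norm_sq_eq, Fin.sum_univ_three, hR]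
  have hSy : ⟪S, y - S⟫ = s * (y 0 - s) := by
    simp [PiLp.inner_apply, Fin.sum_univ_three, hS, mul_comm]
  have hRy : ⟪R, y - R⟫ = r * (y 2 - r) := by
    simp [PiLp.inner_apply, Fin.sum_univ_three, hR, mul_comm]
  have hinner : ⟪y, A⁻¹ • (y - S) + B⁻¹ • (y - R)⟫
      = (A ^ 2 + s * (y 0 - s)) / A + (B ^ 2 + r * (y 2 - r)) / B := by
    rw [inner_add_right, hA, hB, real_inner_inv_norm_smul_sub,
      real_inner_inv_norm_smul_sub, hSy, hRy]
  rw [show -(y 1 ^ 2 + y 2 ^ 2) = (y 0 - s) ^ 2 - A ^ 2 by linear_combination hA2,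
    show -(y 0 ^ 2 + y 1 ^ 2) = (y 2 - r) ^ 2 - B ^ 2 by linear_combination hB2,
    det_walkaway_jacobian s r ω A B _ _ _ hA0 hB0, hinner]
  simp [hω, hA0, hB0]
end
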